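/- With the setup of mixture couplings: if P = Σᵢ θᵢ Pᵢ and Q = Σⱼ ηⱼ Qⱼ, then the Wasserstein-type distance obtained by minimizing Σᵢⱼ wᵢⱼ · Wₚᵖ(Pᵢ, Qⱼ) over transport matrices w with row sums θ and column sums η is an upper bound for the p-Wasserstein distance: Wₚᵖ(P, Q) ≤ min_{w ∈ Γ(θ,η)} Σᵢⱼ wᵢⱼ Wₚᵖ(Pᵢ, Qⱼ). -/

import Mathlib

/-!
Glue optimal couplings `γᵢⱼ` of `(Pᵢ, Qⱼ)` with the weights of a transport matrix `w ∈ Γ(θ,η)`: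
the row and column sums of `w` make `∑ᵢⱼ wᵢⱼ γᵢⱼ` a coupling of `P` and `Q`, and since the cost
integral is linear in the measure, its cost is `∑ᵢⱼ wᵢⱼ Wₚᵖ(Pᵢ,Qⱼ)`.
-/

open MeasureTheory
open scoped ENNReal

namespace MeasureTheory.Measure

variable {α β ι κ : Type*} [MeasurableSpace α] [MeasurableSpace β] [Fintype ι] [Fintype κ]

def couplings (μ : Measure α) (ν : Measure β) : Set (Measure (α × β)) :=
  {γ | IsProbabilityMeasure γ ∧ γ.map Prod.fst = μ ∧ γ.map Prod.snd = ν}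

theorem isProbabilityMeasure_sum_sum_smul {γ : ι → κ → Measure α} (w : ι → κ → ℝ≥0∞)
    (hγ : ∀ i j, IsProbabilityMeasure (γ i j)) (hw : ∑ i, ∑ j, w i j = 1) :
    IsProbabilityMeasure (∑ i, ∑ j, w i j • γ i j) :=
  ⟨by simp [finsetSum_apply, hw]⟩

theorem map_sum_sum_smul_of_map_eq_of_sum_eq {f : α → β} (hf : Measurable f)
    {γ : ι → κ → Measure α} {μ : ι → Measure β} {w : ι → κ → ℝ≥0∞} {θ : ι → ℝ≥0∞}
    (hγ : ∀ i j, (γ i j).map f = μ i) (hw : ∀ i, ∑ j, w i j = θ i) :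
    (∑ i, ∑ j, w i j • γ i j).map f = ∑ i, θ i • μ i := by
  simp only [map_finset_sum hf.aemeasurable, Measure.map_smul, hγ, ← Finset.sum_smul, hw]

theorem sum_sum_smul_mem_couplings {γ : ι → κ → Measure (α × β)} {μ : ι → Measure α}
    {ν : κ → Measure β} {w : ι → κ → ℝ≥0∞} {θ : ι → ℝ≥0∞} {η : κ → ℝ≥0∞}
    (hγ : ∀ i j, γ i j ∈ couplings (μ i) (ν j))
    (hrow : ∀ i, ∑ j, w i j = θ i) (hcol : ∀ j, ∑ i, w i j = η j) (hθ : ∑ i, θ i = 1) :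
    ∑ i, ∑ j, w i j • γ i j ∈ couplings (∑ i, θ i • μ i) (∑ j, η j • ν j) := by
  refine ⟨isProbabilityMeasure_sum_sum_smul w (fun i j => (hγ i j).1) ?_,
    map_sum_sum_smul_of_map_eq_of_sum_eq measurable_fst (fun i j => (hγ i j).2.1) hrow, ?_⟩
  · simp only [hrow, hθ]
  · rw [Finset.sum_comm]
    exact map_sum_sum_smul_of_map_eq_of_sum_eq measurable_snd (fun j i => (hγ i j).2.2) hcol

theorem lintegral_sum_sum_smul (f : α → ℝ≥0∞) (γ : ι → κ → Measure α) (w : ι → κ → ℝ≥0∞) :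
    ∫⁻ x, f x ∂(∑ i, ∑ j, w i j • γ i j) = ∑ i, ∑ j, w i j * ∫⁻ x, f x ∂(γ i j) := by
  simp only [lintegral_finsetSum_measure, lintegral_smul_measure, smul_eq_mul]

end MeasureTheory.Measure

open Measure

theorem wasserstein_le_mixture_wasserstein_general (n : ℕ) (p : ℝ) (m k : ℕ)
    (θ : Fin m → NNReal) (η : Fin k → NNReal)
    (hθ : ∑ i, θ i = 1)
    (Pi : Fin m → Measure (Fin n → ℝ)) (Qj : Fin k → Measure (Fin n → ℝ))
    (P Q : Measure (Fin n → ℝ))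
    (hP : P = ∑ i, (θ i : ENNReal) • Pi i)
    (hQ : Q = ∑ j, (η j : ENNReal) • Qj j)
    (W : Fin m → Fin k → ENNReal)
    (hatt : ∀ i j, ∃ γ : Measure ((Fin n → ℝ) × (Fin n → ℝ)),
      (IsProbabilityMeasure γ ∧ γ.map Prod.fst = Pi i ∧ γ.map Prod.snd = Qj j) ∧
      ∫⁻ z, ENNReal.ofReal (∑ r, |z.1 r - z.2 r| ^ p) ∂γ = W i j) :
    (⨅ γ ∈ {γ : Measure ((Fin n → ℝ) × (Fin n → ℝ)) |
        IsProbabilityMeasure γ ∧ γ.map Prod.fst = P ∧ γ.map Prod.snd = Q},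
      ∫⁻ z, ENNReal.ofReal (∑ r, |z.1 r - z.2 r| ^ p) ∂γ)
    ≤ ⨅ w ∈ {w : Fin m → Fin k → NNReal |
          (∀ i, ∑ j, w i j = θ i) ∧ (∀ j, ∑ i, w i j = η j)},
        ∑ i, ∑ j, (w i j : ENNReal) * W i j := by
  refine le_iInf₂ fun w ⟨hrow, hcol⟩ => ?_
  choose γ hγ hcost using hatt
  have hmix : ∑ i, ∑ j, (w i j : ℝ≥0∞) • γ i j ∈ couplings P Q := by
    subst hP hQ
    exact sum_sum_smul_mem_couplings hγ (fun i => by exact_mod_cast hrow i)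
      (fun j => by exact_mod_cast hcol j) (by exact_mod_cast hθ)
  change ⨅ γ ∈ couplings P Q, _ ≤ _
  refine (biInf_le _ hmix).trans_eq ?_
  simp only [lintegral_sum_sum_smul, hcost]

/-- The mixture-Wasserstein upper bound: `Wₚᵖ(P,Q)` is at most the minimum over
transport matrices `w ∈ Γ(θ,η)` of `∑ᵢⱼ wᵢⱼ Wₚᵖ(Pᵢ,Qⱼ)`, assuming optimal couplings
between the components exist. -/
theorem wasserstein_le_mixture_wasserstein (n : ℕ) (p : ℝ) (hp : 1 ≤ p) (m k : ℕ)
    (θ : Fin m → NNReal) (η : Fin k → NNReal)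
    (hθ : ∑ i, θ i = 1) (hη : ∑ j, η j = 1)
    (Pi : Fin m → Measure (Fin n → ℝ)) (Qj : Fin k → Measure (Fin n → ℝ))
    (hPi : ∀ i, IsProbabilityMeasure (Pi i)) (hQj : ∀ j, IsProbabilityMeasure (Qj j))
    (P Q : Measure (Fin n → ℝ))
    (hP : P = ∑ i, (θ i : ENNReal) • Pi i)
    (hQ : Q = ∑ j, (η j : ENNReal) • Qj j)
    (W : Fin m → Fin k → ENNReal)
    (hW : ∀ i j, W i j =
      ⨅ γ ∈ {γ : Measure ((Fin n → ℝ) × (Fin n → ℝ)) |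
          IsProbabilityMeasure γ ∧ γ.map Prod.fst = Pi i ∧ γ.map Prod.snd = Qj j},
        ∫⁻ z, ENNReal.ofReal (∑ r, |z.1 r - z.2 r| ^ p) ∂γ)
    (hatt : ∀ i j, ∃ γ : Measure ((Fin n → ℝ) × (Fin n → ℝ)),
      (IsProbabilityMeasure γ ∧ γ.map Prod.fst = Pi i ∧ γ.map Prod.snd = Qj j) ∧
      ∫⁻ z, ENNReal.ofReal (∑ r, |z.1 r - z.2 r| ^ p) ∂γ = W i j) :
    (⨅ γ ∈ {γ : Measure ((Fin n → ℝ) × (Fin n → ℝ)) |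
        IsProbabilityMeasure γ ∧ γ.map Prod.fst = P ∧ γ.map Prod.snd = Q},
      ∫⁻ z, ENNReal.ofReal (∑ r, |z.1 r - z.2 r| ^ p) ∂γ)
    ≤ ⨅ w ∈ {w : Fin m → Fin k → NNReal |
          (∀ i, ∑ j, w i j = θ i) ∧ (∀ j, ∑ i, w i j = η j)},
        ∑ i, ∑ j, (w i j : ENNReal) * W i j :=
  wasserstein_le_mixture_wasserstein_general n p m k θ η hθ Pi Qj P Q hP hQ W hatt
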